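/- For every function f : ℤ → ℂ, every integer a, and every integer K ≥ 0, one has T₊(a−7K−3, 7K+3) = 4·T₊(a−K, K) − 3·T₋(a, K) + S(a−7K−3, 4K+2) + 2·S(a−3K−1, 2K+1). -/
import Mathlib


open Finset

/-- Triangular sum `T₋(x,y) = ∑_{k=1}^{y} (y+1-k)·f(x+k)`. -/
noncomputable def Tm (f : ℤ → ℂ) (x y : ℤ) : ℂ :=
  ∑ k ∈ Finset.Icc 1 y, ((y + 1 - k : ℤ) : ℂ) * f (x + k)

/-- Triangular sum `T₊(x,y) = ∑_{k=1}^{y} k·f(x+k)`. -/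
noncomputable def Tp (f : ℤ → ℂ) (x y : ℤ) : ℂ :=
  ∑ k ∈ Finset.Icc 1 y, ((k : ℤ) : ℂ) * f (x + k)

/-- Square sum `S(x,y) = ∑_{i=x+1}^{x+y} ∑_{j=0}^{y-1} f(i+j)`. -/
noncomputable def Sq (f : ℤ → ℂ) (x y : ℤ) : ℂ :=
  ∑ i ∈ Finset.Icc (x + 1) (x + y), ∑ j ∈ Finset.Icc 0 (y - 1), f (i + j)

lemma shift_sum (g : ℤ → ℂ) (x c d : ℤ) :
    ∑ n ∈ Finset.Icc (x + c) (x + d), g n = ∑ k ∈ Finset.Icc c d, g (x + k) := by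
  rw [← Finset.map_add_left_Icc, Finset.sum_map]
  rfl

lemma Tp_eq (f : ℤ → ℂ) (x y : ℤ) :
    Tp f x y = ∑ n ∈ Finset.Icc (x + 1) (x + y), ((n - x : ℤ) : ℂ) * f n := by
  rw [Tp, shift_sum (fun n => ((n - x : ℤ) : ℂ) * f n) x 1 y]
  apply Finset.sum_congr rfl
  intro k _
  norm_num

lemma Tm_eq (f : ℤ → ℂ) (x y : ℤ) :
    Tm f x y = ∑ n ∈ Finset.Icc (x + 1) (x + y), ((x + y + 1 - n : ℤ) : ℂ) * f n := by
  rw [Tm, shift_sum (fun n => ((x + y + 1 - n : ℤ) : ℂ) * f n) x 1 y]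
  apply Finset.sum_congr rfl
  intro k _
  push_cast
  ring_nf

lemma Sq_eq (f : ℤ → ℂ) (x y : ℤ) :
    Sq f x y = ∑ n ∈ Finset.Icc (x + 1) (x + 2 * y - 1),
      (((min (x + y) n - max (x + 1) (n - y + 1) + 1).toNat : ℤ) : ℂ) * f n := by
  have h1 : ∀ i : ℤ, ∑ j ∈ Finset.Icc (0:ℤ) (y - 1), f (i + j)
      = ∑ n ∈ Finset.Icc i (i + (y - 1)), f n := by
    intro i
    rw [show Finset.Icc i (i + (y-1)) = Finset.Icc (i + 0) (i + (y-1)) by ring_nf,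
      shift_sum f i 0 (y - 1)]
  rw [Sq]
  simp_rw [h1]
  -- replace inner sums with indicator sums over the big interval
  set C := Finset.Icc (x + 1) (x + 2 * y - 1) with hC
  have h2 : ∀ i ∈ Finset.Icc (x + 1) (x + y),
      ∑ n ∈ Finset.Icc i (i + (y - 1)), f n
        = ∑ n ∈ C, if n ∈ Finset.Icc i (i + (y - 1)) then f n else 0 := by
    intro i hi
    rw [Finset.sum_ite_mem, Finset.inter_eq_right.2]
    intro n hn
    simp only [hC, Finset.mem_Icc] at *
    omega
  rw [Finset.sum_congr rfl h2, Finset.sum_comm]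
  apply Finset.sum_congr rfl
  intro n hn
  rw [Finset.sum_ite, Finset.sum_const_zero, add_zero, Finset.sum_const]
  have h3 : (Finset.Icc (x+1) (x+y)).filter (fun i => n ∈ Finset.Icc i (i + (y - 1)))
      = Finset.Icc (max (x + 1) (n - y + 1)) (min (x + y) n) := by
    ext i
    simp only [Finset.mem_filter, Finset.mem_Icc]
    omega
  rw [h3, Int.card_Icc, nsmul_eq_mul]
  have h4 : ((x + y) ⊓ n + 1 - (x + 1) ⊔ (n - y + 1)).toNat
      = ((x + y) ⊓ n - (x + 1) ⊔ (n - y + 1) + 1).toNat := by omega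
  rw [h4]
  norm_num
  left
  exact_mod_cast Int.toNat_eq_max _

lemma extend_sum (f : ℤ → ℂ) (c : ℤ → ℤ) (s B : Finset ℤ) (h : s ⊆ B) :
    ∑ n ∈ s, ((c n : ℤ) : ℂ) * f n
      = ∑ n ∈ B, (((if n ∈ s then c n else 0 : ℤ)) : ℂ) * f n := by
  have : ∀ n ∈ B, (((if n ∈ s then c n else 0 : ℤ)) : ℂ) * f n
      = if n ∈ s then ((c n : ℤ) : ℂ) * f n else 0 := by
    intro n _
    split_ifs <;> simp
  rw [Finset.sum_congr rfl this, Finset.sum_ite_mem, Finset.inter_eq_right.2 h]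

/-- For every `f : ℤ → ℂ`, `a : ℤ` and `K ≥ 0`:
`T₊(a−7K−3, 7K+3) = 4·T₊(a−K, K) − 3·T₋(a, K) + S(a−7K−3, 4K+2) + 2·S(a−3K−1, 2K+1)`. -/
theorem Tplus_seven (f : ℤ → ℂ) (a K : ℤ) (hK : 0 ≤ K) :
    Tp f (a - 7 * K - 3) (7 * K + 3) =
      4 * Tp f (a - K) K - 3 * Tm f a K +
        Sq f (a - 7 * K - 3) (4 * K + 2) + 2 * Sq f (a - 3 * K - 1) (2 * K + 1) := by
  set B := Finset.Icc (a - 7 * K - 2) (a + K) with hB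
  rw [Tp_eq, Tp_eq, Tm_eq, Sq_eq, Sq_eq]
  rw [extend_sum f (fun n => n - (a - 7 * K - 3)) _ B
      (by intro n hn; simp only [hB, Finset.mem_Icc] at *; omega),
    extend_sum f (fun n => n - (a - K)) _ B
      (by intro n hn; simp only [hB, Finset.mem_Icc] at *; omega),
    extend_sum f (fun n => a + K + 1 - n) _ B
      (by intro n hn; simp only [hB, Finset.mem_Icc] at *; omega),
    extend_sum f (fun n => ((min (a - 7 * K - 3 + (4 * K + 2)) n
        - max (a - 7 * K - 3 + 1) (n - (4 * K + 2) + 1) + 1).toNat : ℤ)) _ B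
      (by intro n hn; simp only [hB, Finset.mem_Icc] at *; omega),
    extend_sum f (fun n => ((min (a - 3 * K - 1 + (2 * K + 1)) n
        - max (a - 3 * K - 1 + 1) (n - (2 * K + 1) + 1) + 1).toNat : ℤ)) _ B
      (by intro n hn; simp only [hB, Finset.mem_Icc] at *; omega)]
  rw [Finset.mul_sum, Finset.mul_sum, Finset.mul_sum, ← Finset.sum_sub_distrib,
    ← Finset.sum_add_distrib, ← Finset.sum_add_distrib]
  apply Finset.sum_congr rfl
  intro n hn
  simp only [hB, Finset.mem_Icc] at hn
  have hz : (if n ∈ Finset.Icc (a - 7 * K - 3 + 1) (a - 7 * K - 3 + (7 * K + 3))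
        then n - (a - 7 * K - 3) else 0)
      = 4 * (if n ∈ Finset.Icc (a - K + 1) (a - K + K) then n - (a - K) else 0)
        - 3 * (if n ∈ Finset.Icc (a + 1) (a + K) then a + K + 1 - n else 0)
        + (if n ∈ Finset.Icc (a - 7 * K - 3 + 1) (a - 7 * K - 3 + 2 * (4 * K + 2) - 1)
            then ((min (a - 7 * K - 3 + (4 * K + 2)) n
              - max (a - 7 * K - 3 + 1) (n - (4 * K + 2) + 1) + 1).toNat : ℤ) else 0)
        + 2 * (if n ∈ Finset.Icc (a - 3 * K - 1 + 1) (a - 3 * K - 1 + 2 * (2 * K + 1) - 1)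
            then ((min (a - 3 * K - 1 + (2 * K + 1)) n
              - max (a - 3 * K - 1 + 1) (n - (2 * K + 1) + 1) + 1).toNat : ℤ) else 0) := by
    simp only [Finset.mem_Icc]
    split_ifs <;> omega
  have hz' : ((if n ∈ Finset.Icc (a - 7 * K - 3 + 1) (a - 7 * K - 3 + (7 * K + 3))
        then n - (a - 7 * K - 3) else 0 : ℤ) : ℂ)
      = 4 * ((if n ∈ Finset.Icc (a - K + 1) (a - K + K) then n - (a - K) else 0 : ℤ) : ℂ)
        - 3 * ((if n ∈ Finset.Icc (a + 1) (a + K) then a + K + 1 - n else 0 : ℤ) : ℂ)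
        + ((if n ∈ Finset.Icc (a - 7 * K - 3 + 1) (a - 7 * K - 3 + 2 * (4 * K + 2) - 1)
            then ((min (a - 7 * K - 3 + (4 * K + 2)) n
              - max (a - 7 * K - 3 + 1) (n - (4 * K + 2) + 1) + 1).toNat : ℤ) else 0 : ℤ) : ℂ)
        + 2 * ((if n ∈ Finset.Icc (a - 3 * K - 1 + 1) (a - 3 * K - 1 + 2 * (2 * K + 1) - 1)
            then ((min (a - 3 * K - 1 + (2 * K + 1)) n
              - max (a - 3 * K - 1 + 1) (n - (2 * K + 1) + 1) + 1).toNat : ℤ) else 0 : ℤ) : ℂ) := by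
    exact_mod_cast congrArg (fun z : ℤ => (z : ℂ)) hz
  calc _ = ((if n ∈ Finset.Icc (a - 7 * K - 3 + 1) (a - 7 * K - 3 + (7 * K + 3))
        then n - (a - 7 * K - 3) else 0 : ℤ) : ℂ) * f n := rfl
    _ = _ := by rw [hz']; ring
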